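/- arXiv:math/0602667 — 3 statements merged into one kernel-verified Lean document; each statement's English description precedes it below -/
import Mathlib

section
/- Let A be a commutative unital complex Banach algebra and let ψ : Aˣ → ℂ be an additive character of its unit group that is holomorphic on the open set of invertible elements. Then for every x ∈ A: (i) for every λ ∈ ℂ with |λ| > ‖x‖ the element x + λ·1 is invertible, and (ii) ψ(x + λ·1) → 0 as |λ| → ∞. -/
open Filter

/-- For `z ≠ 0`, the element `z • 1` is a unit. -/
lemma aux_isUnit_smul_one {A : Type*} [NormedCommRing A] [NormedAlgebra ℂ A]
    {z : ℂ} (hz : z ≠ 0) : IsUnit (z • (1 : A)) := by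
  refine IsUnit.of_mul_eq_one (z⁻¹ • (1 : A)) ?_
  rw [smul_mul_smul_comm, mul_one, mul_inv_cancel₀ hz, one_smul]

/-- A holomorphic additive character vanishes on scalar multiples of `1`. -/
lemma aux_psi_smul_one {A : Type*} [NormedCommRing A] [NormedAlgebra ℂ A]
    (ψ : A → ℂ)
    (hdiff : ∀ x : A, IsUnit x → DifferentiableAt ℂ ψ x)
    (hadd : ∀ x y : A, IsUnit x → IsUnit y → ψ (x * y) = ψ x + ψ y)
    {z : ℂ} (hz : z ≠ 0) : ψ (z • (1 : A)) = 0 := by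
  have hpsi1 : ψ (1 : A) = 0 := by
    have := hadd 1 1 isUnit_one isUnit_one
    simp only [mul_one] at this
    exact left_eq_add.mp this
  set g : ℂ → ℂ := fun l => ψ (Complex.exp l • (1 : A)) with hg
  have hgadd : ∀ a b : ℂ, g (a + b) = g a + g b := by
    intro a b
    have h1 : (Complex.exp a * Complex.exp b) • (1 : A) =
        (Complex.exp a • (1 : A)) * (Complex.exp b • (1 : A)) := by
      rw [smul_mul_smul_comm, mul_one]
    simp only [hg, Complex.exp_add, h1]
    exact hadd _ _ (aux_isUnit_smul_one (Complex.exp_ne_zero a))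
      (aux_isUnit_smul_one (Complex.exp_ne_zero b))
  have hg0 : g 0 = 0 := by
    have := hgadd 0 0
    simp only [add_zero] at this
    exact left_eq_add.mp this
  have hgdiff : ∀ l : ℂ, DifferentiableAt ℂ g l := by
    intro l
    exact (hdiff _ (aux_isUnit_smul_one (Complex.exp_ne_zero l))).comp l
      ((Complex.differentiable_exp l).smul_const (1 : A))
  set c : ℂ := deriv g 0 with hc
  have hd0 : HasDerivAt g c 0 := (hgdiff 0).hasDerivAt
  have hder : ∀ l : ℂ, HasDerivAt g c l := by
    intro l
    have h1 : HasDerivAt (fun h : ℂ => g (h - l)) c l := by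
      have hinner : HasDerivAt (fun h : ℂ => h - l) 1 l :=
        (hasDerivAt_id l).sub_const l
      have := HasDerivAt.comp l (by simpa using hd0) hinner
      have h' : HasDerivAt (fun h : ℂ => g (h - l)) (c * 1) l := this
      simpa using h'
    have heq : (fun h : ℂ => g l + g (h - l)) = g := by
      funext h
      rw [← hgadd]
      ring_nf
    have := (h1.const_add (g l))
    rwa [heq] at this
  have hlin : ∀ l : ℂ, g l = c * l := by
    have hdiffS : Differentiable ℂ (fun l : ℂ => g l - c * l) := by
      intro l
      exact ((hder l).sub ((hasDerivAt_id l).const_mul c)).differentiableAt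
    have hderS : ∀ l : ℂ, deriv (fun l : ℂ => g l - c * l) l = 0 := by
      intro l
      have : HasDerivAt (fun l : ℂ => g l - c * l) (c - c) l := by
        have h2 : HasDerivAt (fun l : ℂ => c * l) c l := by
          simpa using (hasDerivAt_id l).const_mul c
        exact (hder l).sub h2
      simpa using this.deriv
    intro l
    have := is_const_of_deriv_eq_zero hdiffS hderS l 0
    simp only [mul_zero, sub_zero, hg0, zero_sub, neg_eq_zero] at this
    exact sub_eq_zero.mp this
  have hczero : c = 0 := by
    have h2pi : g (2 * Real.pi * Complex.I) = 0 := by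
      simp only [hg, Complex.exp_two_pi_mul_I, one_smul, hpsi1]
    rw [hlin] at h2pi
    have hne : (2 * Real.pi * Complex.I : ℂ) ≠ 0 := by
      simp [Real.pi_ne_zero, Complex.I_ne_zero, Complex.ofReal_ne_zero]
    exact (mul_eq_zero.mp h2pi).resolve_right hne
  have : ψ (z • (1 : A)) = g (Complex.log z) := by
    simp [hg, Complex.exp_log hz]
  rw [this, hlin, hczero, zero_mul]

/-- Let `A` be a commutative unital complex Banach algebra and `ψ : A → ℂ` a
function that is holomorphic on the open set of invertible elements and
restricts to an additive character of the unit group.  Then for every `x : A`: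
(i) `x + λ • 1` is invertible whenever `|λ| > ‖x‖`, and
(ii) `ψ (x + λ • 1) → 0` as `|λ| → ∞`. -/
theorem additive_character_cuspidal
    {A : Type*} [NormedCommRing A] [NormedAlgebra ℂ A] [CompleteSpace A]
    (ψ : A → ℂ)
    (hdiff : ∀ x : A, IsUnit x → DifferentiableAt ℂ ψ x)
    (hadd : ∀ x y : A, IsUnit x → IsUnit y → ψ (x * y) = ψ x + ψ y) :
    ∀ x : A,
      (∀ l : ℂ, ‖x‖ < ‖l‖ → IsUnit (x + l • (1 : A))) ∧
      Tendsto (fun l : ℂ => ψ (x + l • (1 : A)))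
        (Filter.comap (fun l : ℂ => ‖l‖) Filter.atTop) (nhds 0) := by
  intro x
  -- basic facts
  have hpsi1 : ψ (1 : A) = 0 := by
    have := hadd 1 1 isUnit_one isUnit_one
    simp only [mul_one] at this
    exact left_eq_add.mp this
  have key : ∀ l : ℂ, ‖x‖ < ‖l‖ →
      l ≠ 0 ∧ IsUnit ((1 : A) + l⁻¹ • x) ∧
        x + l • (1 : A) = (l • (1 : A)) * ((1 : A) + l⁻¹ • x) := by
    intro l hl
    have hl0 : l ≠ 0 := by
      intro h
      rw [h, norm_zero] at hl
      exact absurd hl (not_lt.mpr (norm_nonneg x))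
    have hnorm : ‖l⁻¹ • x‖ < 1 := by
      rw [norm_smul, norm_inv]
      rw [inv_mul_lt_iff₀ (lt_of_le_of_lt (norm_nonneg x) hl), mul_one]
      exact hl
    have hu : IsUnit ((1 : A) + l⁻¹ • x) := by
      have := (Units.oneSub (-(l⁻¹ • x)) (by simpa using hnorm)).isUnit
      simpa [sub_neg_eq_add] using this
    refine ⟨hl0, hu, ?_⟩
    rw [mul_add, mul_one, smul_mul_assoc, one_mul, smul_smul,
      mul_inv_cancel₀ hl0, one_smul, add_comm]
  constructor
  · intro l hl
    obtain ⟨hl0, hu, heq⟩ := key l hl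
    rw [heq]
    exact (aux_isUnit_smul_one hl0).mul hu
  · -- the limit
    set L := Filter.comap (fun l : ℂ => ‖l‖) Filter.atTop with hL
    have hnormT : Tendsto (fun l : ℂ => ‖l‖) L atTop := tendsto_comap
    have hev : ∀ᶠ l : ℂ in L, ‖x‖ < ‖l‖ := hnormT.eventually_gt_atTop ‖x‖
    have heq : ∀ᶠ l : ℂ in L,
        ψ (x + l • (1 : A)) = ψ ((1 : A) + l⁻¹ • x) := by
      filter_upwards [hev] with l hl
      obtain ⟨hl0, hu, heq⟩ := key l hl
      rw [heq, hadd _ _ (aux_isUnit_smul_one hl0) hu,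
        aux_psi_smul_one ψ hdiff hadd hl0, zero_add]
    have hinner : Tendsto (fun l : ℂ => (1 : A) + l⁻¹ • x) L (nhds 1) := by
      have hsm : Tendsto (fun l : ℂ => l⁻¹ • x) L (nhds 0) := by
        have hninv : Tendsto (fun l : ℂ => ‖l⁻¹ • x‖) L (nhds 0) := by
          have : Tendsto (fun l : ℂ => ‖l‖⁻¹ * ‖x‖) L (nhds 0) := by
            have h1 : Tendsto (fun l : ℂ => ‖l‖⁻¹) L (nhds 0) :=
              tendsto_inv_atTop_zero.comp hnormT
            simpa using h1.mul_const ‖x‖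
          refine this.congr fun l => ?_
          rw [norm_smul, norm_inv]
        exact tendsto_zero_iff_norm_tendsto_zero.mpr hninv
      have := hsm.const_add (1 : A)
      simpa using this
    have hcont : ContinuousAt ψ (1 : A) :=
      (hdiff 1 isUnit_one).continuousAt
    have := (hcont.tendsto.comp hinner)
    rw [hpsi1] at this
    exact Tendsto.congr' (heq.mono fun _ h => h.symm) this
end

section
/- Let A be a commutative unital complex Banach algebra and let ψ : Aˣ → ℂ be an additive character of its unit group that is holomorphic on the open set of invertible elements. Then for every a ∈ A one has ψ(exp a) = (Dψ(1))(a), where Dψ(1) denotes the Fréchet derivative of ψ at the identity 1 ∈ Aˣ (a continuous complex-linear functional on A); moreover (Dψ(1))(c·1) = 0 for every c ∈ ℂ. -/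
/-!
For fixed `a`, the function `t ↦ ψ (exp (t • a))` is an additive function of `t` which is
differentiable at `0` with derivative `Dψ(1) a`. An additive function differentiable at `0` has
the same derivative everywhere, so it is linear, and evaluating at `t = 1` gives
`ψ (exp a) = Dψ(1) a`. Since `exp (2πi • 1) = 1` and `ψ 1 = 0`, this forces `Dψ(1) 1 = 0`.
-/

open NormedSpace

section AdditiveFunction

variable {𝕜 E : Type*} [RCLike 𝕜] [NormedAddCommGroup E] [NormedSpace 𝕜 E]
  {f : 𝕜 → E} {e : E}

theorem hasDerivAt_of_map_add_of_hasDerivAt_zero (hadd : ∀ s t, f (s + t) = f s + f t)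
    (hf : HasDerivAt f e 0) (t : 𝕜) : HasDerivAt f e t := by
  have hshift : HasDerivAt (fun u => f t + f (u - t)) e t :=
    ((sub_self t ▸ hf).comp_sub_const t t).const_add (f t)
  simpa [← hadd] using hshift

theorem eq_smul_of_map_add_of_hasDerivAt_zero (hadd : ∀ s t, f (s + t) = f s + f t)
    (hf : HasDerivAt f e 0) (t : 𝕜) : f t = t • e := by
  have hf0 : f 0 = 0 := by simpa using hadd 0 0
  have hlin (u : 𝕜) : HasDerivAt (fun u => f u - u • e) 0 u := by
    simpa using (hasDerivAt_of_map_add_of_hasDerivAt_zero hadd hf u).fun_sub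
      ((hasDerivAt_id u).smul_const e)
  have hconst := is_const_of_deriv_eq_zero (fun u => (hlin u).differentiableAt)
    (fun u => (hlin u).deriv) t 0
  simpa [hf0, sub_eq_zero] using hconst

end AdditiveFunction

theorem map_one_of_map_mul_of_isUnit {M G : Type*} [Monoid M] [AddLeftCancelMonoid G] {ψ : M → G}
    (hadd : ∀ x y : M, IsUnit x → IsUnit y → ψ (x * y) = ψ x + ψ y) : ψ 1 = 0 := by
  simpa using hadd 1 1 isUnit_one isUnit_one

section AdditiveCharacter

variable {𝕜 A : Type*} [RCLike 𝕜] [NormedCommRing A] [NormedAlgebra 𝕜 A] [CompleteSpace A]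

theorem map_exp_smul_add {G : Type*} [Add G] {ψ : A → G}
    (hadd : ∀ x y : A, IsUnit x → IsUnit y → ψ (x * y) = ψ x + ψ y) (a : A) (s t : 𝕜) : ψ (exp ((s + t) • a)) = ψ (exp (s • a)) + ψ (exp (t • a)) := by
  -- the algebraic facts about `exp` are stated for `ℚ`-algebras
  let _ := NormedAlgebra.restrictScalars ℚ 𝕜 A
  rw [add_smul, exp_add]
  exact hadd _ _ (isUnit_exp _) (isUnit_exp _)

variable {E : Type*} [NormedAddCommGroup E] [NormedSpace 𝕜 E] {ψ : A → E}

theorem hasDerivAt_comp_exp_smul_zero (hψ : DifferentiableAt 𝕜 ψ 1) (a : A) :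
    HasDerivAt (fun t : 𝕜 => ψ (exp (t • a))) (fderiv 𝕜 ψ 1 a) 0 := by
  simpa [Function.comp_def] using
    hψ.hasFDerivAt.comp_hasDerivAt_of_eq (0 : 𝕜) (hasDerivAt_exp_smul_const a 0) (by simp)

theorem map_exp_eq_fderiv_one (hψ : DifferentiableAt 𝕜 ψ 1)
    (hadd : ∀ x y : A, IsUnit x → IsUnit y → ψ (x * y) = ψ x + ψ y) (a : A) :
    ψ (exp a) = fderiv 𝕜 ψ 1 a := by
  simpa using eq_smul_of_map_add_of_hasDerivAt_zero (map_exp_smul_add hadd a)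
    (hasDerivAt_comp_exp_smul_zero hψ a) 1

end AdditiveCharacter

theorem fderiv_one_apply_one_eq_zero {A E : Type*} [NormedCommRing A] [NormedAlgebra ℂ A]
    [CompleteSpace A] [NormedAddCommGroup E] [NormedSpace ℂ E] {ψ : A → E}
    (hψ : DifferentiableAt ℂ ψ 1)
    (hadd : ∀ x y : A, IsUnit x → IsUnit y → ψ (x * y) = ψ x + ψ y) :
    fderiv ℂ ψ 1 1 = 0 := by
  have hexp : exp ((2 * Real.pi * Complex.I) • (1 : A)) = 1 := by
    rw [← Algebra.algebraMap_eq_smul_one, ← algebraMap_exp_comm, ← Complex.exp_eq_exp_ℂ,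
      Complex.exp_two_pi_mul_I, map_one]
  have h := map_exp_eq_fderiv_one hψ hadd ((2 * Real.pi * Complex.I) • (1 : A))
  rw [hexp, map_one_of_map_mul_of_isUnit hadd, map_smul, eq_comm, smul_eq_zero] at h
  exact h.resolve_left (by simp [Real.pi_ne_zero, Complex.I_ne_zero])

/-- Let `A` be a commutative unital complex Banach algebra and `ψ : A → ℂ` a
function that is holomorphic on the open set of invertible elements and
restricts to an additive character of the unit group.  Then
`ψ (exp a) = (Dψ(1)) a` for every `a : A`, where `Dψ(1)` is the Fréchet
derivative of `ψ` at `1`; moreover `(Dψ(1)) (c • 1) = 0` for every `c : ℂ`. -/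
theorem additive_character_comp_exp_eq_fderiv
    {A : Type*} [NormedCommRing A] [NormedAlgebra ℂ A] [CompleteSpace A]
    (ψ : A → ℂ)
    (hdiff : ∀ x : A, IsUnit x → DifferentiableAt ℂ ψ x)
    (hadd : ∀ x y : A, IsUnit x → IsUnit y → ψ (x * y) = ψ x + ψ y) :
    (∀ a : A, ψ (NormedSpace.exp a) = fderiv ℂ ψ 1 a) ∧
    (∀ c : ℂ, fderiv ℂ ψ 1 (c • (1 : A)) = 0) := by
  have hψ := hdiff 1 isUnit_one
  refine ⟨map_exp_eq_fderiv_one hψ hadd, fun c => ?_⟩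
  rw [map_smul, fderiv_one_apply_one_eq_zero hψ hadd, smul_zero]
end

section
/- Let A be a commutative unital complex Banach algebra and let φ : Aˣ → ℂ ∖ {0} be a multiplicative character of its unit group that is holomorphic on the open set of invertible elements, of order n (i.e. φ(c·1) = c^n for all c ∈ ℂ ∖ {0}). Then for every a ∈ A one has φ(exp a) = exp((Dφ(1))(a)), where Dφ(1) denotes the Fréchet derivative of φ at the identity 1 ∈ Aˣ (a continuous complex-linear functional on A); moreover (Dφ(1))(c·1) = n·c for every c ∈ ℂ. -/
/-! Differentiating `φ (x * y) = φ x * φ y` in `y` at `y = 1` gives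
`Dφ(x)(x v) = φ(x) Dφ(1)(v)` on units. Along the one-parameter group `t ↦ exp (t a)` this says
that `f t = φ (exp (t a))` solves `f' = Dφ(1)(a) f` with `f 0 = φ 1 = 1`, hence
`f t = exp (t Dφ(1)(a))`. The value `Dφ(1)(1) = n` is the derivative at `c = 1` of
`c ↦ φ (c • 1) = c ^ n`. -/

open NormedSpace

section Derivative

variable {𝕜 A : Type*} [NontriviallyNormedField 𝕜] [NormedRing A] [NormedAlgebra 𝕜 A]

theorem fderiv_apply_mul_of_map_mul [CompleteSpace A] {φ : A → 𝕜} {x : A}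
    (hmul : ∀ y : A, IsUnit y → φ (x * y) = φ x * φ y)
    (hφx : DifferentiableAt 𝕜 φ x) (hφ1 : DifferentiableAt 𝕜 φ 1) (v : A) :
    fderiv 𝕜 φ x (x * v) = φ x * fderiv 𝕜 φ 1 v := by
  have hleft : HasFDerivAt (fun y => φ (x * y))
      ((fderiv 𝕜 φ x).comp (ContinuousLinearMap.mul 𝕜 A x)) 1 := by
    refine HasFDerivAt.comp (1 : A) ?_ (ContinuousLinearMap.mul 𝕜 A x).hasFDerivAt
    simpa using hφx.hasFDerivAt
  have hright : HasFDerivAt (fun y => φ (x * y)) (φ x • fderiv 𝕜 φ 1) 1 := by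
    refine (hφ1.hasFDerivAt.const_mul (φ x)).congr_of_eventuallyEq ?_
    filter_upwards [Units.isOpen.mem_nhds isUnit_one] with y hy using hmul y hy
  simpa using congrArg (· v) (hleft.unique hright)

theorem fderiv_apply_one_of_map_smul_one {φ : A → 𝕜} {n : ℤ}
    (hφ : DifferentiableAt 𝕜 φ 1) (hord : ∀ c : 𝕜, c ≠ 0 → φ (c • (1 : A)) = c ^ n) :
    fderiv 𝕜 φ 1 1 = n := by
  have hchain : HasDerivAt (fun c : 𝕜 => φ (c • (1 : A))) (fderiv 𝕜 φ 1 1) 1 := by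
    have hφ' : HasFDerivAt φ (fderiv 𝕜 φ 1) ((1 : 𝕜) • (1 : A)) := by
      simpa using hφ.hasFDerivAt
    simpa [Function.comp_def] using
      hφ'.comp_hasDerivAt (1 : 𝕜) ((hasDerivAt_id (1 : 𝕜)).smul_const (1 : A))
  have hzpow : HasDerivAt (fun c : 𝕜 => φ (c • (1 : A))) (n : 𝕜) 1 := by
    refine ((hasDerivAt_zpow n (1 : 𝕜) (Or.inl one_ne_zero)).congr_of_eventuallyEq ?_)
      |>.congr_deriv (by simp)
    filter_upwards [isOpen_ne.mem_nhds one_ne_zero] with c hc using hord c hc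
  exact hchain.unique hzpow

end Derivative

theorem eq_mul_cexp_of_hasDerivAt {f : ℂ → ℂ} {c : ℂ} (hf : ∀ t, HasDerivAt f (f t * c) t)
    (t : ℂ) : f t = f 0 * Complex.exp (t * c) := by
  have hderiv : ∀ s, HasDerivAt (fun s => f s * Complex.exp (-(s * c))) 0 s := fun s => by
    have hexp : HasDerivAt (fun s => Complex.exp (-(s * c)))
        (Complex.exp (-(s * c)) * -(1 * c)) s :=
      ((hasDerivAt_id s).mul_const c).neg.cexp
    exact ((hf s).mul hexp).congr_deriv (by ring)
  have hconst := is_const_of_deriv_eq_zero (fun s => (hderiv s).differentiableAt)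
    (fun s => (hderiv s).deriv) t 0
  simp only [zero_mul, neg_zero, Complex.exp_zero, mul_one, Complex.exp_neg] at hconst
  rw [← hconst, mul_assoc, inv_mul_cancel₀ (Complex.exp_ne_zero _), mul_one]

section Exponential

variable {A : Type*} [NormedRing A] [NormedAlgebra ℂ A] [CompleteSpace A] {φ : A → ℂ}

theorem hasDerivAt_comp_exp_smul (hdiff : ∀ x : A, IsUnit x → DifferentiableAt ℂ φ x)
    (hmul : ∀ x y : A, IsUnit x → IsUnit y → φ (x * y) = φ x * φ y) (a : A) (t : ℂ) :
    HasDerivAt (fun s : ℂ => φ (exp (s • a))) (φ (exp (t • a)) * fderiv ℂ φ 1 a) t := by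
  have hunit : IsUnit (exp (t • a)) :=
    isUnit_exp_of_mem_ball ((expSeries_radius_eq_top ℂ A).symm ▸ edist_lt_top _ _)
  have hcomp := (hdiff _ hunit).hasFDerivAt.comp_hasDerivAt t (hasDerivAt_exp_smul_const a t)
  rwa [fderiv_apply_mul_of_map_mul (hmul _ · hunit) (hdiff _ hunit) (hdiff 1 isUnit_one)]
    at hcomp

theorem map_exp_eq_cexp_fderiv (hdiff : ∀ x : A, IsUnit x → DifferentiableAt ℂ φ x)
    (hmul : ∀ x y : A, IsUnit x → IsUnit y → φ (x * y) = φ x * φ y) (hφ1 : φ 1 = 1) (a : A) :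
    φ (exp a) = Complex.exp (fderiv ℂ φ 1 a) := by
  simpa [hφ1] using eq_mul_cexp_of_hasDerivAt (hasDerivAt_comp_exp_smul hdiff hmul a) 1

end Exponential

theorem multiplicative_character_comp_exp_eq_exp_fderiv_general
    {A : Type*} [NormedCommRing A] [NormedAlgebra ℂ A] [CompleteSpace A]
    (φ : A → ℂ) (n : ℤ)
    (hdiff : ∀ x : A, IsUnit x → DifferentiableAt ℂ φ x)
    (hmul : ∀ x y : A, IsUnit x → IsUnit y → φ (x * y) = φ x * φ y)
    (hord : ∀ c : ℂ, c ≠ 0 → φ (c • (1 : A)) = c ^ n) :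
    (∀ a : A, φ (NormedSpace.exp a) = Complex.exp (fderiv ℂ φ 1 a)) ∧
    (∀ c : ℂ, fderiv ℂ φ 1 (c • (1 : A)) = n * c) := by
  have hφ1 : φ 1 = 1 := by simpa using hord 1 one_ne_zero
  refine ⟨map_exp_eq_cexp_fderiv hdiff hmul hφ1, fun c => ?_⟩
  rw [map_smul, fderiv_apply_one_of_map_smul_one (hdiff 1 isUnit_one) hord, smul_eq_mul,
    mul_comm]

/-- Let `A` be a commutative unital complex Banach algebra and `φ : A → ℂ` a
function that is holomorphic on the open set of invertible elements, nonzero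
on invertible elements, restricting to a multiplicative character of the unit
group, of order `n` (i.e. `φ (c • 1) = c ^ n` for all nonzero `c`).  Then
`φ (exp a) = exp ((Dφ(1)) a)` for every `a : A`, where `Dφ(1)` is the Fréchet
derivative of `φ` at `1`; moreover `(Dφ(1)) (c • 1) = n * c` for every
`c : ℂ`. -/
theorem multiplicative_character_comp_exp_eq_exp_fderiv
    {A : Type*} [NormedCommRing A] [NormedAlgebra ℂ A] [CompleteSpace A]
    (φ : A → ℂ) (n : ℤ)
    (hne : ∀ x : A, IsUnit x → φ x ≠ 0)
    (hdiff : ∀ x : A, IsUnit x → DifferentiableAt ℂ φ x)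
    (hmul : ∀ x y : A, IsUnit x → IsUnit y → φ (x * y) = φ x * φ y)
    (hord : ∀ c : ℂ, c ≠ 0 → φ (c • (1 : A)) = c ^ n) :
    (∀ a : A, φ (NormedSpace.exp a) = Complex.exp (fderiv ℂ φ 1 a)) ∧
    (∀ c : ℂ, fderiv ℂ φ 1 (c • (1 : A)) = n * c) :=
  multiplicative_character_comp_exp_eq_exp_fderiv_general φ n hdiff hmul hord
end
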